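/- Let p be prime and a, b ∈ {0,...,p-1} distinct, m, n ∈ {1,...,p-2}. Then the sum over k from 0 to p-1, excluding k ≡ -a and k ≡ -b mod p, of (a+k)^m / (b+k)^n is congruent mod p to -(a-b)^(m-n) · C(m,n), where (a-b)^(m-n) with negative exponent means the inverse of (a-b)^(n-m) mod p. -/

import Mathlib

/-!
With `d = a - b` and `y = b + k`, the sum becomes `∑_{y ∈ 𝔽_p} (y + d) ^ m * y ^ (-n)`. As
`y ^ (-n) = y ^ (p - 1 - n)` on `𝔽_p`, the binomial theorem turns it into a combination of the
power sums `∑_y y ^ i` with `i < 2 (p - 1)`, which vanish except for `i = p - 1`, where the sum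
is `-1`. Only the term `C(m, n) d ^ (m - n) y ^ n` of `(y + d) ^ m` hits that exponent.
-/

open Finset

theorem ZMod.sum_range_natCast {M : Type*} [AddCommMonoid M] (p : ℕ) [NeZero p]
    (f : ZMod p → M) : ∑ k ∈ range p, f k = ∑ x : ZMod p, f x :=
  sum_nbij' (↑) ZMod.val (by simp) (fun x _ => by simpa using ZMod.val_lt x)
    (fun k hk => ZMod.val_cast_of_lt (mem_range.mp hk)) (fun x _ => by simp) (fun _ _ => rfl)

namespace FiniteField

variable {K : Type*} [Field K] [Fintype K]

local notation "q" => Fintype.card K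

theorem sum_pow_of_lt_two_mul {i : ℕ} (hi : i < 2 * (q - 1)) :
    ∑ x : K, x ^ i = if i = q - 1 then -1 else 0 := by
  rcases lt_or_ge i (q - 1) with hlt | hge
  · rw [sum_pow_lt_card_sub_one K i hlt, if_neg hlt.ne]
  obtain ⟨j, rfl⟩ := Nat.exists_eq_add_of_le hge
  have hq : 0 < q - 1 := by have := Fintype.one_lt_card (α := K); omega
  -- Fermat: `x ^ (q - 1 + j) = x ^ j` away from `0`, so the sums differ only in the term at `0`.
  classical
  have key : ∑ x : K, x ^ (q - 1 + j) + 0 ^ j = ∑ x : K, x ^ j := by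
    rw [Fintype.sum_eq_add_sum_compl 0, Fintype.sum_eq_add_sum_compl (0 : K) (fun x => x ^ j),
      zero_pow (by omega), zero_add, add_comm]
    congr 1
    refine sum_congr rfl fun x hx => ?_
    rw [pow_add, pow_card_sub_one_eq_one x (by simpa using hx), one_mul]
  rw [sum_pow_lt_card_sub_one K j (by omega)] at key
  rcases Nat.eq_zero_or_pos j with rfl | hj
  · simpa [eq_neg_iff_add_eq_zero] using key
  · rw [zero_pow hj.ne', add_zero] at key
    rw [key, if_neg (by omega)]

theorem inv_pow_eq_pow_card_sub_one_sub {n : ℕ} (hn0 : n ≠ 0) (hn : n < q - 1) (y : K) :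
    (y ^ n)⁻¹ = y ^ (q - 1 - n) := by
  rcases eq_or_ne y 0 with rfl | hy
  · rw [zero_pow (by omega : q - 1 - n ≠ 0), zero_pow hn0, inv_zero]
  · refine inv_eq_of_mul_eq_one_right ?_
    rw [← pow_add, Nat.add_sub_cancel' hn.le, pow_card_sub_one_eq_one y hy]

theorem sum_add_pow_mul_inv_pow (d : K) {m n : ℕ} (hn0 : n ≠ 0) (hn : n < q - 1)
    (hm : m < n + (q - 1)) :
    ∑ y : K, (y + d) ^ m * (y ^ n)⁻¹ = -(m.choose n * d ^ (m - n)) := by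
  have hexp : ∀ j ∈ range (m + 1), j + (q - 1 - n) < 2 * (q - 1) := fun j hj => by
    rw [mem_range] at hj; omega
  calc ∑ y : K, (y + d) ^ m * (y ^ n)⁻¹
      = ∑ y : K, ∑ j ∈ range (m + 1), m.choose j * d ^ (m - j) * y ^ (j + (q - 1 - n)) := by
        refine sum_congr rfl fun y _ => ?_
        rw [inv_pow_eq_pow_card_sub_one_sub hn0 hn, add_pow, sum_mul]
        refine sum_congr rfl fun j _ => ?_
        ring
    _ = ∑ j ∈ range (m + 1), m.choose j * d ^ (m - j) * ∑ y : K, y ^ (j + (q - 1 - n)) := by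
        rw [sum_comm]
        simp only [mul_sum]
    _ = ∑ j ∈ range (m + 1), if j = n then -(m.choose j * d ^ (m - j) : K) else 0 := by
        refine sum_congr rfl fun j hj => ?_
        rw [sum_pow_of_lt_two_mul (hexp j hj)]
        by_cases hjn : j = n
        · simp [hjn, show n + (q - 1 - n) = q - 1 by omega]
        · rw [if_neg (by omega), if_neg hjn, mul_zero]
    _ = -(m.choose n * d ^ (m - n)) := by
        rw [sum_ite_eq']
        split_ifs with hnm
        · rfl
        · rw [Nat.choose_eq_zero_of_lt (by simpa using hnm)]
          simp

end FiniteField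

theorem sum_ratio_shifted_general (p a b m n : ℕ) [Fact p.Prime]
    (hm : 1 ≤ m ∧ m ≤ p - 2) (hn : 1 ≤ n ∧ n ≤ p - 2) :
    (∑ k ∈ (Finset.range p).filter
        (fun (k : ℕ) => (k : ZMod p) ≠ -(a : ZMod p) ∧ (k : ZMod p) ≠ -(b : ZMod p)),
        ((a : ZMod p) + (k : ZMod p)) ^ m * (((b : ZMod p) + (k : ZMod p)) ^ n)⁻¹) =
      -((a : ZMod p) - (b : ZMod p)) ^ ((m : ℤ) - (n : ℤ)) * (m.choose n : ZMod p) := by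
  have hp2 := (Fact.out : p.Prime).two_le
  -- The excluded terms vanish anyway: `(a + k) ^ m = 0` at `k = -a`, and `0⁻¹ = 0` at `k = -b`.
  rw [sum_filter_of_ne fun k _ hk => ⟨fun h => hk (by simp [h, zero_pow (by omega : m ≠ 0)]),
    fun h => hk (by simp [h, zero_pow (by omega : n ≠ 0)])⟩,
    ZMod.sum_range_natCast p (fun x => ((a : ZMod p) + x) ^ m * (((b : ZMod p) + x) ^ n)⁻¹)]
  have hshift : ∑ x : ZMod p, ((a : ZMod p) + x) ^ m * (((b : ZMod p) + x) ^ n)⁻¹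
      = ∑ y : ZMod p, (y + ((a : ZMod p) - b)) ^ m * (y ^ n)⁻¹ := by
    rw [← Equiv.sum_comp (Equiv.addLeft (b : ZMod p))
      fun y => (y + ((a : ZMod p) - b)) ^ m * (y ^ n)⁻¹]
    exact sum_congr rfl fun x _ => by simp only [Equiv.coe_addLeft]; ring
  rw [hshift, FiniteField.sum_add_pow_mul_inv_pow _ (by omega) (by rw [ZMod.card]; omega)
    (by rw [ZMod.card]; omega)]
  rcases le_or_gt n m with hnm | hnm
  · rw [← Nat.cast_sub hnm, zpow_natCast]; ring
  · rw [Nat.choose_eq_zero_of_lt hnm]; simp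

theorem sum_ratio_shifted (p a b m n : ℕ) [Fact p.Prime]
    (ha : a ≤ p - 1) (hb : b ≤ p - 1) (hab : a ≠ b)
    (hm : 1 ≤ m ∧ m ≤ p - 2) (hn : 1 ≤ n ∧ n ≤ p - 2) :
    (∑ k ∈ (Finset.range p).filter
        (fun (k : ℕ) => (k : ZMod p) ≠ -(a : ZMod p) ∧ (k : ZMod p) ≠ -(b : ZMod p)),
        ((a : ZMod p) + (k : ZMod p)) ^ m * (((b : ZMod p) + (k : ZMod p)) ^ n)⁻¹) =
      -((a : ZMod p) - (b : ZMod p)) ^ ((m : ℤ) - (n : ℤ)) * (m.choose n : ZMod p) :=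
  sum_ratio_shifted_general p a b m n hm hn
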